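/- Let A, B be bounded positive operators on a complex Hilbert space H, and let B = B_a + B_s be the canonical Lebesgue decomposition with B_a ≪ A maximal and B_s ⊥ A. The decomposition of B into an A-absolutely continuous and an A-singular summand is unique if and only if there exists α ≥ 0 with B_a ≤ αA. -/

import Mathlib

open Filter

local notation "⟪" x ", " y "⟫" => @inner ℂ _ _ x y

variable {H : Type*} [NormedAddCommGroup H] [InnerProductSpace ℂ H] [CompleteSpace H]

/-- The quadratic-form order: `A ≤ B` iff `⟨Ax, x⟩ ≤ ⟨Bx, x⟩` for all `x`. -/
def QuadLE (A B : H →L[ℂ] H) : Prop :=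
  ∀ x : H, (⟪A x, x⟫).re ≤ (⟪B x, x⟫).re

/-- `B` is absolutely continuous with respect to `A` (`B ≪ A`): for every sequence `(xₙ)`,
if `⟨Axₙ, xₙ⟩ → 0` and `⟨B(xₙ−xₘ), xₙ−xₘ⟩ → 0` as `n, m → ∞`, then `⟨Bxₙ, xₙ⟩ → 0`. -/
def AbsCont (B A : H →L[ℂ] H) : Prop :=
  ∀ x : ℕ → H,
    Tendsto (fun n => (⟪A (x n), x n⟫).re) atTop (nhds 0) →
    (∀ ε > (0 : ℝ), ∃ N : ℕ, ∀ n ≥ N, ∀ m ≥ N,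
      (⟪B (x n - x m), x n - x m⟫).re < ε) →
    Tendsto (fun n => (⟪B (x n), x n⟫).re) atTop (nhds 0)

/-- `A` and `B` are mutually singular (`A ⊥ B`): the only bounded positive operator `C` with
`C ≤ A` and `C ≤ B` is `C = 0`. -/
def MutSing (A B : H →L[ℂ] H) : Prop :=
  ∀ C : H →L[ℂ] H, C.IsPositive → QuadLE C A → QuadLE C B → C = 0

/-!
If `B_a ≤ α A` and `B = B₁ + B₂` is a second decomposition, maximality gives `B₁ ≤ B_a`, and
`D = B_a - B₁ = B₂ - B_s` lies below both `B₂` and `α A`; a multiple of `D` is then a common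
minorant of `B₂` and `A`, so `D = 0`.

Conversely write `B_a = R† R`. If no multiple of `A` dominates `B_a`, the uniform boundedness
principle, applied to the functionals `⟪R x, ·⟫` with `⟪A x, x⟫ ≤ 1`, yields a unit vector `h`
such that `T = e ⊗ e`, `e = R† h`, is dominated by no multiple of `A`. A positive operator below
`T` is a multiple of `T`, hence `T ⊥ A`. Moreover `B_a - T = S† S` with `S = (1 - h ⊗ h) R`, and
`R† R ≪ A` says that `√A x ↦ R x` is closable, a property that survives composition with a
projection of corank one; so `B_a - T ≪ A`. By maximality `B_s + T ⊥ A`, hence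
`B = (B_a - T) + (B_s + T)` is a second decomposition, and uniqueness forces `T = 0`.
-/

open ContinuousLinearMap InnerProductSpace Topology
open scoped InnerProduct

section

variable {E F : Type*} [NormedAddCommGroup E] [InnerProductSpace ℂ E]
  [NormedAddCommGroup F] [InnerProductSpace ℂ F]

lemma re_inner_rankOne_self_apply (e z : E) : (⟪rankOne ℂ e e z, z⟫).re = ‖⟪e, z⟫‖ ^ 2 := by
  rw [rankOne_apply, inner_smul_left, ← Complex.normSq_eq_conj_mul_self, Complex.normSq_eq_norm_sq]
  norm_cast

lemma re_inner_ofReal_smul_apply (r : ℝ) (T : E →L[ℂ] E) (z : E) :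
    (⟪((r : ℂ) • T) z, z⟫).re = r * (⟪T z, z⟫).re := by
  rw [smul_apply, inner_smul_left, Complex.conj_ofReal, Complex.re_ofReal_mul]

lemma re_inner_smul_apply_smul (T : E →L[ℂ] E) (c : ℂ) (x : E) :
    (⟪T (c • x), c • x⟫).re = ‖c‖ ^ 2 * (⟪T x, x⟫).re :=
  T.reApplyInnerSelf_smul x

lemma re_inner_adjoint_comp_self_apply [CompleteSpace E] [CompleteSpace F] (R : E →L[ℂ] F)
    (z : E) : (⟪(R† ∘L R) z, z⟫).re = ‖R z‖ ^ 2 :=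
  (apply_norm_sq_eq_inner_adjoint_left R z).symm

lemma exists_eq_inner_smul_of_norm_le (S : E →L[ℂ] F) (e : E) (h : ∀ z, ‖S z‖ ≤ ‖⟪e, z⟫‖) :
    ∃ v : F, ∀ z, S z = ⟪e, z⟫ • v := by
  rcases eq_or_ne e 0 with rfl | he
  · exact ⟨0, fun z => by simpa using h z⟩
  have hee : ⟪e, e⟫ ≠ 0 := inner_self_ne_zero.mpr he
  refine ⟨⟪e, e⟫⁻¹ • S e, fun z => ?_⟩
  have hperp : ⟪e, z - (⟪e, z⟫ / ⟪e, e⟫) • e⟫ = 0 := by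
    rw [inner_sub_right, inner_smul_right]
    field_simp
    ring
  have hSperp : S (z - (⟪e, z⟫ / ⟪e, e⟫) • e) = 0 :=
    norm_le_zero_iff.mp (by simpa only [hperp, norm_zero] using h (z - (⟪e, z⟫ / ⟪e, e⟫) • e))
  rw [map_sub, map_smul, sub_eq_zero] at hSperp
  rw [hSperp, smul_smul, div_eq_mul_inv]

lemma exists_eq_adjoint_comp_self [CompleteSpace E] {T : E →L[ℂ] E} (hT : T.IsPositive) :
    ∃ R : E →L[ℂ] E, T = R† ∘L R := by
  obtain ⟨R, hR⟩ := CStarAlgebra.nonneg_iff_eq_star_mul_self.mp ((nonneg_iff_isPositive T).mpr hT)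
  exact ⟨R, by rw [hR, star_eq_adjoint, mul_def]⟩

lemma adjoint_comp_self_sub_rankOne [CompleteSpace E] [CompleteSpace F] (R : E →L[ℂ] F) {h : F}
    (hh : ‖h‖ = 1) :
    R† ∘L R - rankOne ℂ (adjoint R h) (adjoint R h) =
      (R - rankOne ℂ h h ∘L R)† ∘L (R - rankOne ℂ h h ∘L R) := by
  have hP : rankOne ℂ h h ∘L rankOne ℂ h h = rankOne ℂ h h := isIdempotentElem_rankOne_self hh
  simp only [map_sub, adjoint_comp, adjoint_rankOne, sub_comp, comp_sub, comp_assoc]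
  rw [← comp_assoc (rankOne ℂ h h) (rankOne ℂ h h), hP, sub_self, sub_zero, rankOne_comp,
    comp_rankOne]

section QuadLE

variable {S T : E →L[ℂ] E}

lemma QuadLE.isPositive_sub (hS : S.IsPositive) (hT : T.IsPositive) (h : QuadLE S T) :
    (T - S).IsPositive :=
  ⟨hT.isSymmetric.sub hS.isSymmetric, fun x => by
    simpa [reApplyInnerSelf_apply, inner_sub_left] using h x⟩

lemma quadLE_add_right (hT : T.IsPositive) : QuadLE S (S + T) := fun x => by
  simpa [inner_add_left] using hT.re_inner_nonneg_left x

lemma quadLE_add_left (hS : S.IsPositive) : QuadLE T (S + T) := fun x => by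
  simpa [inner_add_left] using hS.re_inner_nonneg_left x

lemma sub_quadLE (hS : S.IsPositive) : QuadLE (T - S) T := fun x => by
  simpa [inner_sub_left] using hS.re_inner_nonneg_left x

end QuadLE

section AbsCont

variable {A S T : E →L[ℂ] E}

lemma AbsCont.of_quadLE (hS : S.IsPositive) (h : QuadLE S A) : AbsCont S A :=
  fun x hx _ => squeeze_zero (fun n => hS.re_inner_nonneg_left (x n)) (fun n => h (x n)) hx

lemma AbsCont.add (hS : S.IsPositive) (hT : T.IsPositive) (hSA : AbsCont S A)
    (hTA : AbsCont T A) : AbsCont (S + T) A := by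
  intro x hx hcauchy
  have hmono : ∀ {U : E →L[ℂ] E}, QuadLE U (S + T) → ∀ ε > (0 : ℝ), ∃ N : ℕ, ∀ n ≥ N, ∀ m ≥ N,
      (⟪U (x n - x m), x n - x m⟫).re < ε := fun hU ε hε =>
    (hcauchy ε hε).imp fun _ hN n hn m hm => (hU _).trans_lt (hN n hn m hm)
  simpa [inner_add_left] using
    (hSA x hx (hmono (quadLE_add_right hT))).add (hTA x hx (hmono (quadLE_add_left hS)))

end AbsCont

/-- Closability of the densely defined map `√A x ↦ R x`, phrased through `⟪A x, x⟫ = ‖√A x‖²`. -/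
def IsFormClosable (A : E →L[ℂ] E) (R : E →L[ℂ] F) : Prop :=
  ∀ (x : ℕ → E) (v : F), Tendsto (fun n => (⟪A (x n), x n⟫).re) atTop (𝓝 0) →
    Tendsto (fun n => R (x n)) atTop (𝓝 v) → v = 0

lemma cauchySeq_iff_sq_norm_sub_lt {G : Type*} [SeminormedAddCommGroup G] (u : ℕ → G) :
    CauchySeq u ↔ ∀ ε > (0 : ℝ), ∃ N : ℕ, ∀ n ≥ N, ∀ m ≥ N, ‖u n - u m‖ ^ 2 < ε := by
  simp only [← dist_eq_norm, Metric.cauchySeq_iff]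
  constructor
  · intro h ε hε
    obtain ⟨N, hN⟩ := h (√ε) (Real.sqrt_pos.mpr hε)
    exact ⟨N, fun n hn m hm => (Real.lt_sqrt dist_nonneg).mp (hN n hn m hm)⟩
  · intro h ε hε
    obtain ⟨N, hN⟩ := h (ε ^ 2) (by positivity)
    exact ⟨N, fun n hn m hm => (pow_lt_pow_iff_left₀ dist_nonneg hε.le two_ne_zero).mp
      (hN n hn m hm)⟩

lemma absCont_adjoint_comp_self_iff [CompleteSpace E] [CompleteSpace F] {A : E →L[ℂ] E}
    (R : E →L[ℂ] F) : AbsCont (R† ∘L R) A ↔ IsFormClosable A R := by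
  simp only [AbsCont, IsFormClosable, re_inner_adjoint_comp_self_apply]
  simp only [map_sub, ← cauchySeq_iff_sq_norm_sub_lt]
  constructor
  · intro hac x v hx hv
    simpa using tendsto_nhds_unique (hv.norm.pow 2) (hac x hx hv.cauchySeq)
  · intro hcl x hx hcauchy
    obtain ⟨v, hv⟩ := cauchySeq_tendsto_of_complete hcauchy
    obtain rfl := hcl x v hx hv
    simpa using hv.norm.pow 2

theorem IsFormClosable.sub_rankOne_comp {A : E →L[ℂ] E} {R : E →L[ℂ] F}
    (hR : IsFormClosable A R) {h : F} (hh : ‖h‖ = 1) :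
    IsFormClosable A (R - rankOne ℂ h h ∘L R) := by
  intro x w hx hw
  set Q := R - rankOne ℂ h h ∘L R
  set c : ℕ → ℂ := fun n => ⟪h, R (x n)⟫
  have hRx : ∀ n, R (x n) = c n • h + Q (x n) := fun n => by simp [Q, c]
  have hhQ : ∀ z, ⟪h, Q z⟫ = 0 := fun z => by
    simp [Q, inner_self_eq_norm_sq_to_K, hh]
  have hhw : ⟪h, w⟫ = 0 :=
    tendsto_nhds_unique ((tendsto_const_nhds.inner hw).congr fun n => hhQ (x n))
      tendsto_const_nhds
  by_cases hc : Tendsto (fun n => ‖c n‖) atTop atTop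
  · -- rescaling by the diverging coefficients `c n` exhibits `h` itself as a limit
    have hc' : Tendsto (fun n => (c n)⁻¹) atTop (𝓝 0) := tendsto_zero_iff_norm_tendsto_zero.mpr
      (hc.inv_tendsto_atTop.congr fun n => (norm_inv (c n)).symm)
    have h0 : h = 0 := by
      refine hR (fun n => (c n)⁻¹ • x n) h ?_ ?_
      · simpa only [re_inner_smul_apply_smul, mul_zero] using (hc'.norm.pow 2).mul hx
      · have hlim : Tendsto (fun n => h + (c n)⁻¹ • Q (x n)) atTop (𝓝 h) := by
          simpa using tendsto_const_nhds.add (hc'.smul hw)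
        refine hlim.congr' ((hc.eventually_gt_atTop 0).mono fun n hn => ?_)
        simp only [map_smul, hRx n, smul_add, inv_smul_smul₀ (norm_pos_iff.mp hn)]
    simp [h0] at hh
  · rw [tendsto_atTop] at hc
    push Not at hc
    obtain ⟨M, hM⟩ := hc
    obtain ⟨γ, -, φ, hφ, hγ⟩ := tendsto_subseq_of_frequently_bounded
      (Metric.isBounded_closedBall (x := 0) (r := M))
      (hM.mono fun n hn => mem_closedBall_zero_iff.mpr hn.le)
    have hlim : γ • h + w = 0 := hR (x ∘ φ) _ (hx.comp hφ.tendsto_atTop) <| by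
      simpa only [Function.comp_apply, hRx] using
        (hγ.smul_const h).add (hw.comp hφ.tendsto_atTop)
    have hγ : γ = 0 := by
      simpa [inner_add_right, inner_smul_right, inner_self_eq_norm_sq_to_K, hh, hhw] using
        congrArg (⟪h, ·⟫) hlim
    simpa [hγ] using hlim

lemma sq_norm_le_of_norm_le_of_re_inner_le_one {A : E →L[ℂ] E} (hA : A.IsPositive)
    {R : E →L[ℂ] F} {C : ℝ} (hC : ∀ x, (⟪A x, x⟫).re ≤ 1 → ‖R x‖ ≤ C) (x : E) :
    ‖R x‖ ^ 2 ≤ C ^ 2 * (⟪A x, x⟫).re := by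
  have hbound : ∀ s > (⟪A x, x⟫).re, ‖R x‖ ^ 2 ≤ C ^ 2 * s := by
    intro s hs
    have hs0 : 0 < s := (hA.re_inner_nonneg_left x).trans_lt hs
    have ht : 0 < √s := Real.sqrt_pos.mpr hs0
    have hnorm : ‖(((√s)⁻¹ : ℝ) : ℂ)‖ = (√s)⁻¹ := by simp [ht.le]
    have hscale := hC ((((√s)⁻¹ : ℝ) : ℂ) • x) <| by
      rw [re_inner_smul_apply_smul, hnorm, inv_pow, Real.sq_sqrt hs0.le]
      exact (inv_mul_le_one₀ hs0).mpr hs.le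
    rw [map_smul, norm_smul, hnorm, inv_mul_le_iff₀ ht] at hscale
    calc ‖R x‖ ^ 2 ≤ (√s * C) ^ 2 := pow_le_pow_left₀ (norm_nonneg _) hscale 2
      _ = C ^ 2 * s := by rw [mul_pow, Real.sq_sqrt hs0.le, mul_comm]
  have hcont : Tendsto (fun s => C ^ 2 * s) (𝓝[>] (⟪A x, x⟫).re) (𝓝 (C ^ 2 * (⟪A x, x⟫).re)) :=
    ((continuous_const.mul continuous_id).tendsto _).mono_left nhdsWithin_le_nhds
  exact ge_of_tendsto hcont (eventually_nhdsWithin_of_forall hbound)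

lemma exists_sq_norm_le_of_forall_norm_eq_one [CompleteSpace F] {A : E →L[ℂ] E}
    (hA : A.IsPositive) (R : E →L[ℂ] F)
    (hR : ∀ u : F, ‖u‖ = 1 → ∃ c : ℝ, ∀ x, ‖⟪u, R x⟫‖ ^ 2 ≤ c * (⟪A x, x⟫).re) :
    ∃ α : ℝ, 0 ≤ α ∧ ∀ x, ‖R x‖ ^ 2 ≤ α * (⟪A x, x⟫).re := by
  let ι := {x : E // (⟪A x, x⟫).re ≤ 1}
  have hpointwise : ∀ u : F, ∃ C, ∀ x : ι, ‖innerSL ℂ (R x.1) u‖ ≤ C := by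
    intro u
    rcases eq_or_ne u 0 with rfl | hu
    · exact ⟨0, fun x => by simp⟩
    obtain ⟨c, hc⟩ := hR ((‖u‖⁻¹ : ℂ) • u) (norm_smul_inv_norm hu)
    refine ⟨‖u‖ * (|c| + 1), fun x => ?_⟩
    have ha0 : 0 ≤ (⟪A x.1, x.1⟫).re := hA.re_inner_nonneg_left x.1
    have hsq : (‖u‖⁻¹ * ‖⟪u, R x.1⟫‖) ^ 2 ≤ |c| :=
      calc (‖u‖⁻¹ * ‖⟪u, R x.1⟫‖) ^ 2 = ‖⟪(‖u‖⁻¹ : ℂ) • u, R x.1⟫‖ ^ 2 := by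
            rw [inner_smul_left, norm_mul]; simp
        _ ≤ c * (⟪A x.1, x.1⟫).re := hc x.1
        _ ≤ |c| := by nlinarith [le_abs_self c, abs_nonneg c, x.2]
    have hle : ‖u‖⁻¹ * ‖⟪u, R x.1⟫‖ ≤ |c| + 1 := by nlinarith [norm_nonneg ⟪u, R x.1⟫]
    calc ‖innerSL ℂ (R x.1) u‖ = ‖u‖ * (‖u‖⁻¹ * ‖⟪u, R x.1⟫‖) := by
          rw [innerSL_apply_apply, norm_inner_symm, mul_inv_cancel_left₀ (norm_ne_zero_iff.mpr hu)]
      _ ≤ ‖u‖ * (|c| + 1) := by gcongr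
  obtain ⟨C, hC⟩ := banach_steinhaus hpointwise
  exact ⟨C ^ 2, sq_nonneg C, sq_norm_le_of_norm_le_of_re_inner_le_one hA fun x hx => by
    simpa [innerSL_apply_norm] using hC ⟨x, hx⟩⟩

lemma mutSing_rankOne_self [CompleteSpace E] {A : E →L[ℂ] E} {e : E}
    (he : ∀ c : ℝ, ∃ x, c * (⟪A x, x⟫).re < ‖⟪e, x⟫‖ ^ 2) : MutSing (rankOne ℂ e e) A := by
  intro C hC hCe hCA
  obtain ⟨S, rfl⟩ := exists_eq_adjoint_comp_self hC
  obtain ⟨v, hv⟩ := exists_eq_inner_smul_of_norm_le S e fun z => by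
    have := hCe z
    rw [re_inner_adjoint_comp_self_apply, re_inner_rankOne_self_apply] at this
    exact (pow_le_pow_iff_left₀ (norm_nonneg _) (norm_nonneg _) two_ne_zero).mp this
  have hv0 : v = 0 := by
    by_contra hv0
    obtain ⟨x, hx⟩ := he (‖v‖ ^ 2)⁻¹
    have := hCA x
    rw [re_inner_adjoint_comp_self_apply, hv, norm_smul, mul_pow] at this
    rw [inv_mul_lt_iff₀ (by positivity)] at hx
    linarith
  have hS : S = 0 := ext fun z => by simp [hv, hv0]
  simp [hS]

lemma mutSing_add_of_absCont_sub {A B Ba Bs T : E →L[ℂ] E} (hsum : B = Ba + Bs)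
    (hmax : ∀ C : E →L[ℂ] E, C.IsPositive → QuadLE C B → AbsCont C A → QuadLE C Ba)
    (hpos : (Ba - T).IsPositive) (hac : AbsCont (Ba - T) A) (hT : MutSing T A) :
    MutSing (Bs + T) A := by
  intro C hC hCle hCA
  have hle := hmax (Ba - T + C) (hpos.add hC)
    (fun z => by
      have := hCle z
      simp only [hsum, add_apply, sub_apply, inner_add_left, inner_sub_left, Complex.add_re,
        Complex.sub_re] at this ⊢
      linarith)
    (AbsCont.add hpos hC hac (.of_quadLE hC hCA))
  refine hT C hC (fun z => ?_) hCA
  have := hle z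
  simp only [add_apply, sub_apply, inner_add_left, inner_sub_left, Complex.add_re,
    Complex.sub_re] at this
  linarith

lemma MutSing.eq_zero_of_quadLE {A B D : E →L[ℂ] E} (hsing : MutSing B A) (hA : A.IsPositive)
    (hD : D.IsPositive) (hDB : QuadLE D B) {α : ℝ} (hα : 0 ≤ α)
    (hDA : ∀ x, (⟪D x, x⟫).re ≤ α * (⟪A x, x⟫).re) : D = 0 := by
  set r : ℝ := (1 + α)⁻¹
  have hr : 0 < r := by positivity
  have hr1 : r * (1 + α) = 1 := inv_mul_cancel₀ (by positivity)
  have hC := hsing ((r : ℂ) • D) (hD.smul_of_nonneg (by exact_mod_cast hr.le))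
    (fun x => by
      have : 0 ≤ (⟪D x, x⟫).re := hD.re_inner_nonneg_left x
      rw [re_inner_ofReal_smul_apply]
      nlinarith [hDB x])
    (fun x => by
      have : 0 ≤ (⟪A x, x⟫).re := hA.re_inner_nonneg_left x
      rw [re_inner_ofReal_smul_apply]
      nlinarith [mul_le_mul_of_nonneg_left (hDA x) hr.le])
  exact (smul_eq_zero.mp hC).resolve_left (by exact_mod_cast hr.ne')

end

theorem stmt_16_general (A B Ba Bs : H →L[ℂ] H)
    (hA : A.IsPositive) (hBa : Ba.IsPositive) (hBs : Bs.IsPositive)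
    (hsum : B = Ba + Bs) (hac : AbsCont Ba A)
    (hmax : ∀ C : H →L[ℂ] H, C.IsPositive → QuadLE C B → AbsCont C A → QuadLE C Ba) :
    (∀ B₁ B₂ : H →L[ℂ] H, B₁.IsPositive → B₂.IsPositive → B = B₁ + B₂ →
        AbsCont B₁ A → MutSing B₂ A → B₁ = Ba ∧ B₂ = Bs) ↔
      ∃ α : ℝ, 0 ≤ α ∧ ∀ x : H, (⟪Ba x, x⟫).re ≤ α * (⟪A x, x⟫).re := by
  constructor
  · intro huniq
    by_contra hdom
    obtain ⟨R, rfl⟩ := exists_eq_adjoint_comp_self hBa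
    obtain ⟨h, hh, hlarge⟩ :
        ∃ h : H, ‖h‖ = 1 ∧ ∀ c : ℝ, ∃ x, c * (⟪A x, x⟫).re < ‖⟪h, R x⟫‖ ^ 2 := by
      by_contra! hbdd
      obtain ⟨α, hα, hR⟩ := exists_sq_norm_le_of_forall_norm_eq_one hA R hbdd
      exact hdom ⟨α, hα, fun x => by simpa only [re_inner_adjoint_comp_self_apply] using hR x⟩
    set e := adjoint R h
    have he : ∀ z, ⟪e, z⟫ = ⟪h, R z⟫ := fun z => adjoint_inner_left R z h
    have hpos : (R† ∘L R - rankOne ℂ e e).IsPositive := by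
      rw [adjoint_comp_self_sub_rankOne R hh]
      exact isPositive_adjoint_comp_self _
    have hac' : AbsCont (R† ∘L R - rankOne ℂ e e) A := by
      rw [adjoint_comp_self_sub_rankOne R hh, absCont_adjoint_comp_self_iff]
      exact ((absCont_adjoint_comp_self_iff R).mp hac).sub_rankOne_comp hh
    have hsing' : MutSing (Bs + rankOne ℂ e e) A := mutSing_add_of_absCont_sub hsum hmax hpos hac'
      (mutSing_rankOne_self (by simpa only [he] using hlarge))
    have hT := (huniq _ _ hpos (hBs.add (isPositive_rankOne_self e)) (by rw [hsum]; abel)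
      hac' hsing').1
    rw [sub_eq_self, rankOne_eq_zero, or_self] at hT
    obtain ⟨x, hx⟩ := hlarge 0
    simp [← he, hT] at hx
  · rintro ⟨α, hα, hdom⟩ B₁ B₂ h₁ h₂ hB hac₁ hsing₂
    have h₁Ba : QuadLE B₁ Ba := hmax B₁ h₁ (hB ▸ quadLE_add_right h₂) hac₁
    have hD : Ba - B₁ = B₂ - Bs := by
      rw [sub_eq_sub_iff_add_eq_add, ← hsum, hB, add_comm]
    have hD0 : Ba - B₁ = 0 :=
      hsing₂.eq_zero_of_quadLE hA (h₁Ba.isPositive_sub h₁ hBa) (hD ▸ sub_quadLE hBs) hα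
        fun x => (sub_quadLE h₁ x).trans (hdom x)
    obtain rfl : B₁ = Ba := (sub_eq_zero.mp hD0).symm
    exact ⟨rfl, add_left_cancel (hB.symm.trans hsum)⟩

/-- **Ando's uniqueness theorem** (Theorem 7.2, Hilbert space case). Let `B = B_a + B_s` be
the canonical Lebesgue decomposition of `B` with respect to `A` (`B_a ≪ A` maximal,
`B_s ⊥ A`). The decomposition of `B` into an `A`-absolutely continuous and an `A`-singular
positive summand is unique iff `B_a ≤ αA` for some `α ≥ 0`. -/
theorem stmt_16 (A B Ba Bs : H →L[ℂ] H)
    (hA : A.IsPositive) (hB : B.IsPositive) (hBa : Ba.IsPositive) (hBs : Bs.IsPositive)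
    (hsum : B = Ba + Bs) (hac : AbsCont Ba A) (hsing : MutSing Bs A)
    (hmax : ∀ C : H →L[ℂ] H, C.IsPositive → QuadLE C B → AbsCont C A → QuadLE C Ba) :
    (∀ B₁ B₂ : H →L[ℂ] H, B₁.IsPositive → B₂.IsPositive → B = B₁ + B₂ →
        AbsCont B₁ A → MutSing B₂ A → B₁ = Ba ∧ B₂ = Bs) ↔
      ∃ α : ℝ, 0 ≤ α ∧ ∀ x : H, (⟪Ba x, x⟫).re ≤ α * (⟪A x, x⟫).re :=
  stmt_16_general A B Ba Bs hA hBa hBs hsum hac hmax
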